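/- arXiv:0910.1038 — 5 statements merged into one kernel-verified Lean document; each statement's English description precedes it below -/
import Mathlib

section
/- Let M be a model category which is left proper and in which, for every weak equivalence w : X' → X, the coproduct morphism w ⊔ w : X' ⊔ X' → X ⊔ X is again a weak equivalence. Then the cylinder-homotopy relation ∼ is a congruence on the full subcategory Fib(M) of fibrant objects, and the canonical functor Fib(M)/∼ → Ho Fib(M) from the quotient category to the homotopy category (the localization of Fib(M) at its weak equivalences) is faithful. -/
open CategoryTheory CategoryTheory.Limits

universe v u

/-- A (closed) model structure on a category `C` with finite limits and colimits,
in the sense of Quillen: classes of cofibrations, fibrations and weak equivalences,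
containing all isomorphisms, satisfying two-out-of-three for weak equivalences,
closure under retracts, the lifting axioms and the factorization axioms. -/
structure ModelStructure (C : Type u) [Category.{v} C]
    [HasFiniteLimits C] [HasFiniteColimits C] where
  cof : MorphismProperty C
  fib : MorphismProperty C
  weq : MorphismProperty C
  cof_of_isIso : ∀ {X Y : C} (f : X ⟶ Y), IsIso f → cof f
  fib_of_isIso : ∀ {X Y : C} (f : X ⟶ Y), IsIso f → fib f
  weq_of_isIso : ∀ {X Y : C} (f : X ⟶ Y), IsIso f → weq f
  weq_comp : ∀ {X Y Z : C} (f : X ⟶ Y) (g : Y ⟶ Z), weq f → weq g → weq (f ≫ g)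
  weq_of_comp_left : ∀ {X Y Z : C} (f : X ⟶ Y) (g : Y ⟶ Z), weq f → weq (f ≫ g) → weq g
  weq_of_comp_right : ∀ {X Y Z : C} (f : X ⟶ Y) (g : Y ⟶ Z), weq g → weq (f ≫ g) → weq f
  cof_retract : ∀ {A B A' B' : C} (f : A ⟶ B) (g : A' ⟶ B')
    (iA : A ⟶ A') (rA : A' ⟶ A) (iB : B ⟶ B') (rB : B' ⟶ B),
    iA ≫ rA = 𝟙 A → iB ≫ rB = 𝟙 B → iA ≫ g = f ≫ iB → g ≫ rB = rA ≫ f → cof g → cof f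
  fib_retract : ∀ {A B A' B' : C} (f : A ⟶ B) (g : A' ⟶ B')
    (iA : A ⟶ A') (rA : A' ⟶ A) (iB : B ⟶ B') (rB : B' ⟶ B),
    iA ≫ rA = 𝟙 A → iB ≫ rB = 𝟙 B → iA ≫ g = f ≫ iB → g ≫ rB = rA ≫ f → fib g → fib f
  weq_retract : ∀ {A B A' B' : C} (f : A ⟶ B) (g : A' ⟶ B')
    (iA : A ⟶ A') (rA : A' ⟶ A) (iB : B ⟶ B') (rB : B' ⟶ B),
    iA ≫ rA = 𝟙 A → iB ≫ rB = 𝟙 B → iA ≫ g = f ≫ iB → g ≫ rB = rA ≫ f → weq g → weq f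
  lift_of_weq_cof : ∀ {A B X Y : C} (i : A ⟶ B) (p : X ⟶ Y),
    cof i → weq i → fib p → HasLiftingProperty i p
  lift_of_weq_fib : ∀ {A B X Y : C} (i : A ⟶ B) (p : X ⟶ Y),
    cof i → fib p → weq p → HasLiftingProperty i p
  factor_cof_triv_fib : ∀ {X Y : C} (f : X ⟶ Y),
    ∃ (Z : C) (i : X ⟶ Z) (p : Z ⟶ Y), cof i ∧ fib p ∧ weq p ∧ i ≫ p = f
  factor_triv_cof_fib : ∀ {X Y : C} (f : X ⟶ Y),
    ∃ (Z : C) (i : X ⟶ Z) (p : Z ⟶ Y), cof i ∧ weq i ∧ fib p ∧ i ≫ p = f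

namespace ModelStructure

variable {C : Type u} [Category.{v} C] [HasFiniteLimits C] [HasFiniteColimits C]
  (M : ModelStructure C)

/-- An object is fibrant if the unique morphism to the terminal object is a fibration. -/
def Fibrant (X : C) : Prop := M.fib (terminal.from X)

/-- An object is cofibrant if the unique morphism from the initial object is a cofibration. -/
def Cofibrant (X : C) : Prop := M.cof (initial.to X)

/-- A cylinder for `X`: a cofibration `ins : X ⊔ X ⟶ Z` and a weak equivalence `p : Z ⟶ X`
whose composite is the fold map. -/
structure Cylinder (X : C) where
  Z : C
  ins : (X ⨿ X) ⟶ Z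
  p : Z ⟶ X
  cof_ins : M.cof ins
  weq_p : M.weq p
  ins_p : ins ≫ p = coprod.desc (𝟙 X) (𝟙 X)

/-- `f` and `g` are cylinder homotopic if there is a cylinder homotopy from `f` to `g`. -/
def CylinderHomotopic {X Y : C} (f g : X ⟶ Y) : Prop :=
  ∃ (cyl : M.Cylinder X) (H : cyl.Z ⟶ Y),
    coprod.inl ≫ cyl.ins ≫ H = f ∧ coprod.inr ≫ cyl.ins ≫ H = g

/-- A path object for `Y`: a weak equivalence `s : Y ⟶ P` and a fibration `pr : P ⟶ Y ⨯ Y`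
whose composite is the diagonal. -/
structure PathObject (Y : C) where
  P : C
  pr : P ⟶ (Y ⨯ Y)
  s : Y ⟶ P
  fib_pr : M.fib pr
  weq_s : M.weq s
  s_pr : s ≫ pr = prod.lift (𝟙 Y) (𝟙 Y)

/-- `f` and `g` are path homotopic if there is a path homotopy from `f` to `g`. -/
def PathHomotopic {X Y : C} (f g : X ⟶ Y) : Prop :=
  ∃ (po : M.PathObject Y) (K : X ⟶ po.P),
    K ≫ po.pr ≫ prod.fst = f ∧ K ≫ po.pr ≫ prod.snd = g

/-- Left properness: weak equivalences are closed under pushouts along cofibrations. -/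
def LeftProper : Prop :=
  ∀ ⦃A B X P : C⦄ (f : A ⟶ X) (g : A ⟶ B) (h : X ⟶ P) (k : B ⟶ P),
    IsPushout f g h k → M.cof g → M.weq f → M.weq k

/-- Right properness: weak equivalences are closed under pullbacks along fibrations. -/
def RightProper : Prop :=
  ∀ ⦃P X Y B : C⦄ (fst : P ⟶ X) (snd : P ⟶ Y) (f : X ⟶ B) (g : Y ⟶ B),
    IsPullback fst snd f g → M.fib g → M.weq f → M.weq snd

/-- The weak equivalences of the full subcategory of fibrant objects. -/
def weqFib : MorphismProperty (ObjectProperty.FullSubcategory M.Fibrant) := fun _ _ f => M.weq f.hom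

/-- The cylinder homotopy relation on the full subcategory of fibrant objects. -/
def cylRel : HomRel (ObjectProperty.FullSubcategory M.Fibrant) :=
  fun {X Y} f g => M.CylinderHomotopic (X := X.obj) (Y := Y.obj) f.hom g.hom

/-- The weak equivalences of the full subcategory of cofibrant objects. -/
def weqCof : MorphismProperty (ObjectProperty.FullSubcategory M.Cofibrant) := fun _ _ f => M.weq f.hom

/-- The path homotopy relation on the full subcategory of cofibrant objects. -/
def pathRel : HomRel (ObjectProperty.FullSubcategory M.Cofibrant) :=
  fun {X Y} f g => M.PathHomotopic (X := X.obj) (Y := Y.obj) f.hom g.hom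

end ModelStructure

/-!
Left properness, applied to the pushout of a good cylinder `X' ⨿ X' ⟶ I` along `w ⨿ w`, shows
that precomposition with a weak equivalence `w : X' ⟶ X` reflects left homotopy. Taking for `w` a
cofibrant replacement of `X`, the fundamental lemma of homotopical algebra then shows that two maps
into a fibrant object are homotopic if and only if they become equal in the homotopy category
`Ho(M)`. Hence on `Fib(M)` the homotopy relation is the kernel of `Fib(M) ⥤ Ho(M)`; it is therefore
a congruence, and as this functor factors through `Ho Fib(M)`, the functor
`Fib(M)/∼ ⥤ Ho Fib(M)` is faithful.
-/

attribute [local simp] coprod.inl_desc coprod.inr_desc coprod.inl_desc_assoc coprod.inr_desc_assoc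
  pushout.inr_desc pushout.inr_desc_assoc

namespace HomotopicalAlgebra

variable {C : Type u} [Category.{v} C] [ModelCategory C]

lemma LeftHomotopyRel.of_precomp_weakEquivalence
    (hproper : ∀ ⦃A B X P : C⦄ (f : A ⟶ X) (g : A ⟶ B) (h : X ⟶ P) (k : B ⟶ P),
      IsPushout f g h k → cofibrations C g → weakEquivalences C f → weakEquivalences C k)
    {X' X Y : C} (w : X' ⟶ X) [WeakEquivalence w] [WeakEquivalence (coprod.map w w)]
    {f g : X ⟶ Y} (h : LeftHomotopyRel (w ≫ f) (w ≫ g)) : LeftHomotopyRel f g := by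
  obtain ⟨P, _, ⟨H⟩⟩ := h.exists_good_cylinder
  have : WeakEquivalence (pushout.inl P.i (coprod.map w w)) :=
    ⟨hproper _ _ _ _ (IsPushout.of_hasPushout _ _).flip (mem_cofibrations _)
      (mem_weakEquivalences _)⟩
  let π : pushout P.i (coprod.map w w) ⟶ X :=
    pushout.desc (P.π ≫ w) (coprod.desc (𝟙 X) (𝟙 X)) (by ext <;> simp)
  have : WeakEquivalence π :=
    weakEquivalence_of_precomp_of_fac (f := pushout.inl _ _) (pushout.inl_desc _ _ _)
  let Q : Cylinder X :=
    { I := pushout P.i (coprod.map w w)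
      i₀ := coprod.inl ≫ pushout.inr _ _
      i₁ := coprod.inr ≫ pushout.inr _ _
      π := π
      i₀_π := by simp [π]
      i₁_π := by simp [π] }
  exact ⟨Q, ⟨{ h := pushout.desc H.h (coprod.desc f g) (by ext <;> simp) }⟩⟩

lemma LeftHomotopyRel.iff_areEqualizedByLocalization
    (hproper : ∀ ⦃A B X P : C⦄ (f : A ⟶ X) (g : A ⟶ B) (h : X ⟶ P) (k : B ⟶ P),
      IsPushout f g h k → cofibrations C g → weakEquivalences C f → weakEquivalences C k)
    (hcoprod : ∀ ⦃X' X : C⦄ (w : X' ⟶ X),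
      weakEquivalences C w → weakEquivalences C (coprod.map w w))
    {X Y : C} [IsFibrant Y] {f g : X ⟶ Y} :
    LeftHomotopyRel f g ↔ AreEqualizedByLocalization (weakEquivalences C) f g := by
  refine ⟨fun h => factorsThroughLocalization C h, fun h => ?_⟩
  obtain ⟨X₀, _, w, _, _⟩ := CofibrantObject.HoCat.exists_resolution X
  have : WeakEquivalence (coprod.map w w) := ⟨hcoprod w (mem_weakEquivalences w)⟩
  refine of_precomp_weakEquivalence hproper w ?_
  rw [iff_map_eq (weakEquivalences C).Q, Functor.map_comp, Functor.map_comp, h.map_eq]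

end HomotopicalAlgebra

namespace ModelStructure

open HomotopicalAlgebra

lemma isStableUnderRetracts_of_retractAxiom {C : Type u} [Category.{v} C]
    {W : MorphismProperty C}
    (hW : ∀ {A B A' B' : C} (f : A ⟶ B) (g : A' ⟶ B')
      (iA : A ⟶ A') (rA : A' ⟶ A) (iB : B ⟶ B') (rB : B' ⟶ B),
      iA ≫ rA = 𝟙 A → iB ≫ rB = 𝟙 B → iA ≫ g = f ≫ iB → g ≫ rB = rA ≫ f → W g → W f) :
    W.IsStableUnderRetracts where
  of_retract h := hW _ _ _ _ _ _ h.retract_left h.retract_right h.i_w h.r_w.symm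

variable {C : Type u} [Category.{v} C] [HasFiniteLimits C] [HasFiniteColimits C]
  (M : ModelStructure C)

@[reducible]
noncomputable def toModelCategory : ModelCategory C where
  categoryWithFibrations := ⟨M.fib⟩
  categoryWithCofibrations := ⟨M.cof⟩
  categoryWithWeakEquivalences := ⟨M.weq⟩
  cm2 :=
    { comp_mem := M.weq_comp
      of_postcomp := M.weq_of_comp_right
      of_precomp := M.weq_of_comp_left }
  cm3a := isStableUnderRetracts_of_retractAxiom M.weq_retract
  cm3b := isStableUnderRetracts_of_retractAxiom M.fib_retract
  cm3c := isStableUnderRetracts_of_retractAxiom M.cof_retract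
  cm4a i p hi hwi hp := M.lift_of_weq_cof i p hi.mem hwi.mem hp.mem
  cm4b i p hi hp hwp := M.lift_of_weq_fib i p hi.mem hp.mem hwp.mem
  cm5a := ⟨fun f => by
    obtain ⟨Z, i, p, hi, hwi, hp, fac⟩ := M.factor_triv_cof_fib f
    exact ⟨{ Z, i, p, fac, hi := ⟨hi, hwi⟩, hp }⟩⟩
  cm5b := ⟨fun f => by
    obtain ⟨Z, i, p, hi, hp, hwp, fac⟩ := M.factor_cof_triv_fib f
    exact ⟨{ Z, i, p, fac, hi, hp := ⟨hp, hwp⟩ }⟩⟩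

lemma cylinderHomotopic_iff_leftHomotopyRel {X Y : C} (f g : X ⟶ Y) :
    letI := M.toModelCategory
    M.CylinderHomotopic f g ↔ LeftHomotopyRel f g := by
  let := M.toModelCategory
  constructor
  · rintro ⟨cyl, H, h₀, h₁⟩
    have ins_p := cyl.ins_p
    let P : HomotopicalAlgebra.Cylinder X :=
      { I := cyl.Z
        i₀ := coprod.inl ≫ cyl.ins
        i₁ := coprod.inr ≫ cyl.ins
        π := cyl.p
        i₀_π := by simp [ins_p]
        i₁_π := by simp [ins_p]
        weakEquivalence_π := ⟨cyl.weq_p⟩ }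
    exact ⟨P, ⟨{ h := H
                 h₀ := (Category.assoc _ _ _).trans h₀
                 h₁ := (Category.assoc _ _ _).trans h₁ }⟩⟩
  · intro h
    obtain ⟨P, _, ⟨h⟩⟩ := h.exists_good_cylinder
    exact ⟨⟨P.I, P.i, P.π, mem_cofibrations P.i, mem_weakEquivalences P.π,
      by ext <;> simp⟩, h.h, by simp, by simp⟩

lemma areEqualizedByLocalization_of_cylRel {X Y : ObjectProperty.FullSubcategory M.Fibrant}
    {f g : X ⟶ Y} (h : M.cylRel f g) : AreEqualizedByLocalization M.weqFib f g := by
  let := M.toModelCategory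
  have : IsFibrant X.obj := ⟨X.property⟩
  have : IsFibrant Y.obj := ⟨Y.property⟩
  obtain ⟨P, _, ⟨H⟩⟩ :=
    ((M.cylinderHomotopic_iff_leftHomotopyRel _ _).1 h).exists_very_good_cylinder
  let Q : HomotopicalAlgebra.Cylinder X :=
    { toPrecylinder := P.toPrecylinder.toFullSubcategory (mem_fibrations (terminal.from P.I))
      weakEquivalence_π := ⟨mem_weakEquivalences P.π⟩ }
  exact LeftHomotopyRel.factorsThroughLocalization _
    ⟨Q, ⟨Precylinder.LeftHomotopy.fullSubcategoryEquiv.symm H⟩⟩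

lemma cylRel_eq_homRel (hproper : M.LeftProper)
    (hcoprod : ∀ ⦃X' X : C⦄ (w : X' ⟶ X), M.weq w → M.weq (coprod.map w w)) :
    M.cylRel = (ObjectProperty.ι M.Fibrant ⋙ M.weq.Q).homRel := by
  let := M.toModelCategory
  funext X Y f g
  have : IsFibrant Y.obj := ⟨Y.property⟩
  exact propext ((M.cylinderHomotopic_iff_leftHomotopyRel _ _).trans
    (LeftHomotopyRel.iff_areEqualizedByLocalization hproper hcoprod))

lemma cylRel_of_areEqualizedByLocalization (hproper : M.LeftProper)
    (hcoprod : ∀ ⦃X' X : C⦄ (w : X' ⟶ X), M.weq w → M.weq (coprod.map w w))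
    {X Y : ObjectProperty.FullSubcategory M.Fibrant} {f g : X ⟶ Y}
    (h : AreEqualizedByLocalization M.weqFib f g) : M.cylRel f g := by
  rw [M.cylRel_eq_homRel hproper hcoprod]
  exact h.map_eq_of_isInvertedBy _ fun _ _ w hw => Localization.inverts M.weq.Q M.weq w.hom hw

end ModelStructure

open ModelStructure in
/-- If `M` is left proper and `w ⊔ w` is a weak equivalence for every weak equivalence `w`,
then cylinder homotopy is a congruence on the full subcategory of fibrant objects and the
canonical functor from the quotient category to the localization at weak equivalences
(the homotopy category of fibrant objects) is faithful. -/
theorem faithful_quotient_to_homotopyCategory_of_fibrant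
    {C : Type u} [Category.{v} C] [HasFiniteLimits C] [HasFiniteColimits C]
    (M : ModelStructure C) (hproper : M.LeftProper)
    (hcoprod : ∀ ⦃X' X : C⦄ (w : X' ⟶ X), M.weq w → M.weq (coprod.map w w)) :
    Congruence M.cylRel ∧
    ∃ (h : ∀ (X Y : ObjectProperty.FullSubcategory M.Fibrant) (f g : X ⟶ Y),
        M.cylRel f g → M.weqFib.Q.map f = M.weqFib.Q.map g),
      (CategoryTheory.Quotient.lift M.cylRel M.weqFib.Q h).Faithful := by
  have : Congruence M.cylRel := M.cylRel_eq_homRel hproper hcoprod ▸ inferInstance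
  refine ⟨this, fun _ _ _ _ h => M.areEqualizedByLocalization_of_cylRel h,
    ⟨fun {_ _} a b hab => ?_⟩⟩
  obtain ⟨f, rfl⟩ := (Quotient.functor M.cylRel).map_surjective a
  obtain ⟨g, rfl⟩ := (Quotient.functor M.cylRel).map_surjective b
  exact CategoryTheory.Quotient.sound _
    (M.cylRel_of_areEqualizedByLocalization hproper hcoprod hab)
end

section
/- Let M be a model category which is left proper and in which w ⊔ w is a weak equivalence for every weak equivalence w. Then for all fibrant objects X, Y of M and all parallel morphisms f, g : X → Y, one has L f = L g in the homotopy category Ho Fib(M) if and only if f and g are cylinder homotopic. In particular, the cylinder-homotopy relation is transitive on morphisms between fibrant objects. -/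
open CategoryTheory CategoryTheory.Limits

universe v u

/-!
Cylinder homotopy is reflexive, symmetric and stable under postcomposition in any model category.
Transitivity comes from gluing two cylinders along a common end: the glued object still maps to
`X` by a weak equivalence because, by left properness, the pushout along a cofibration of the
weak equivalence `a ⊔ 𝟙` (a retract of `a ⊔ a`) is a weak equivalence. The same gluing shows
that precomposition with a weak equivalence `w` reflects homotopy: push a cylinder of the source
out along `w ⊔ w`. Precomposition preserves homotopies into fibrant objects (lift a cylinder
against one whose projection is a fibration), so homotopy is a congruence on `Fib(M)`, and in
the quotient every weak equivalence with cofibrant target becomes invertible. A cofibrant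
replacement `X' → X` thus gives a functor `Fib(M) ⥤ Fib(M)/∼` inverting weak equivalences; it
factors through `Ho Fib(M)`, so `L f = L g` makes `X' → X ⇉ Y` homotopic, and cancelling the
weak equivalence `X' → X` gives `f ∼ g`. Conversely, a homotopy through a cylinder whose
projection is a fibration writes `f` and `g` as `i₀ ≫ H` and `i₁ ≫ H` with `i₀, i₁` sections
of the same weak equivalence.
-/

namespace ModelStructure

variable {C : Type u} [Category.{v} C] [HasFiniteLimits C] [HasFiniteColimits C]
  (M : ModelStructure C)

attribute [local simp] coprod.inl_desc coprod.inr_desc coprod.inl_desc_assoc coprod.inr_desc_assoc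
  pushout.inl_desc pushout.inr_desc pushout.inl_desc_assoc pushout.inr_desc_assoc

lemma fib_of_rlp {X Y : C} (p : X ⟶ Y)
    (h : ∀ {A B : C} (i : A ⟶ B), M.cof i → M.weq i → HasLiftingProperty i p) :
    M.fib p := by
  obtain ⟨Z, i, q, hi, hwi, hq, hiq⟩ := M.factor_triv_cof_fib p
  have := h i hi hwi
  have sq : CommSq (𝟙 X) i p q := ⟨by simp [hiq]⟩
  exact M.fib_retract p q i sq.lift (𝟙 Y) (𝟙 Y) sq.fac_left (by simp)
    (by simp [hiq]) (by simp [sq.fac_right]) hq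

lemma cof_of_llp {X Y : C} (i : X ⟶ Y)
    (h : ∀ {A B : C} (p : A ⟶ B), M.fib p → M.weq p → HasLiftingProperty i p) :
    M.cof i := by
  obtain ⟨Z, j, p, hj, hp, hwp, hjp⟩ := M.factor_cof_triv_fib i
  have := h p hp hwp
  have sq : CommSq j i p (𝟙 Y) := ⟨by simp [hjp]⟩
  exact M.cof_retract i j (𝟙 X) (𝟙 X) sq.lift p (by simp) sq.fac_right
    (by simp [sq.fac_left]) (by simp [hjp]) hj

lemma fib_comp {X Y Z : C} {f : X ⟶ Y} {g : Y ⟶ Z} (hf : M.fib f) (hg : M.fib g) :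
    M.fib (f ≫ g) :=
  M.fib_of_rlp _ fun i hi hwi =>
    have := M.lift_of_weq_cof i f hi hwi hf
    have := M.lift_of_weq_cof i g hi hwi hg
    inferInstance

lemma cof_comp {X Y Z : C} {f : X ⟶ Y} {g : Y ⟶ Z} (hf : M.cof f) (hg : M.cof g) :
    M.cof (f ≫ g) :=
  M.cof_of_llp _ fun p hp hwp =>
    have := M.lift_of_weq_fib f p hf hp hwp
    have := M.lift_of_weq_fib g p hg hp hwp
    inferInstance

lemma fibrant_of_fib {X Y : C} {p : X ⟶ Y} (hp : M.fib p) (hY : M.Fibrant Y) : M.Fibrant X := by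
  rw [Fibrant, ← terminal.comp_from p]
  exact M.fib_comp hp hY

lemma weq_of_comp_eq_id {X Y : C} {s : X ⟶ Y} {p : Y ⟶ X} (hp : M.weq p)
    (h : s ≫ p = 𝟙 X) : M.weq s :=
  M.weq_of_comp_right s p hp (h ▸ M.weq_of_isIso _ inferInstance)

lemma exists_extension_of_fibrant {A B Y : C} {j : A ⟶ B} (hj : M.cof j) (hwj : M.weq j)
    (hY : M.Fibrant Y) (a : A ⟶ Y) : ∃ b : B ⟶ Y, j ≫ b = a := by
  have := M.lift_of_weq_cof j (terminal.from Y) hj hwj hY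
  have sq : CommSq a j (terminal.from Y) (terminal.from B) := ⟨terminal.hom_ext _ _⟩
  exact ⟨sq.lift, sq.fac_left⟩

lemma exists_lift_of_cofibrant {A E B : C} (hA : M.Cofibrant A) {q : E ⟶ B} (hq : M.fib q)
    (hwq : M.weq q) (b : A ⟶ B) : ∃ l : A ⟶ E, l ≫ q = b := by
  have := M.lift_of_weq_fib (initial.to A) q hA hq hwq
  have sq : CommSq (initial.to E) (initial.to A) q b := ⟨initial.hom_ext _ _⟩
  exact ⟨sq.lift, sq.fac_right⟩

lemma nonempty_cylinder (X : C) : Nonempty (M.Cylinder X) := by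
  obtain ⟨Z, i, p, hi, -, hwp, hip⟩ := M.factor_cof_triv_fib (coprod.desc (𝟙 X) (𝟙 X))
  exact ⟨⟨Z, i, p, hi, hwp, hip⟩⟩

lemma cylinderHomotopic_of_weq {X Y R : C} (j : X ⨿ X ⟶ R) {q : R ⟶ X} (hq : M.weq q)
    (hjq : j ≫ q = coprod.desc (𝟙 X) (𝟙 X)) (H : R ⟶ Y) :
    M.CylinderHomotopic (coprod.inl ≫ j ≫ H) (coprod.inr ≫ j ≫ H) := by
  obtain ⟨Z, i, r, hi, -, hwr, hir⟩ := M.factor_cof_triv_fib j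
  refine ⟨⟨Z, i, r ≫ q, hi, M.weq_comp r q hwr hq, by rw [reassoc_of% hir, hjq]⟩, r ≫ H,
    ?_, ?_⟩ <;> rw [reassoc_of% hir]

lemma cylinderHomotopic_of_comp_eq {X Y B : C} {q : Y ⟶ B} (hq : M.fib q) (hwq : M.weq q)
    {u v : X ⟶ Y} (h : u ≫ q = v ≫ q) : M.CylinderHomotopic u v := by
  obtain ⟨cyl⟩ := M.nonempty_cylinder X
  have := M.lift_of_weq_fib cyl.ins q cyl.cof_ins hq hwq
  have sq : CommSq (coprod.desc u v) cyl.ins q (cyl.p ≫ u ≫ q) :=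
    ⟨by ext <;> simp [reassoc_of% cyl.ins_p, h]⟩
  exact ⟨cyl, sq.lift, by rw [sq.fac_left, coprod.inl_desc],
    by rw [sq.fac_left, coprod.inr_desc]⟩

/-- Factor the projection as a trivial cofibration followed by a fibration, and extend the
homotopy along the first factor. -/
lemma exists_cylinder_fib_homotopy {X Y : C} {f g : X ⟶ Y} (hY : M.Fibrant Y)
    (h : M.CylinderHomotopic f g) :
    ∃ (cyl : M.Cylinder X) (H : cyl.Z ⟶ Y), M.fib cyl.p ∧
      coprod.inl ≫ cyl.ins ≫ H = f ∧ coprod.inr ≫ cyl.ins ≫ H = g := by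
  obtain ⟨cyl, H, rfl, rfl⟩ := h
  obtain ⟨Z, j, q, hj, hwj, hq, hjq⟩ := M.factor_triv_cof_fib cyl.p
  obtain ⟨H', hH'⟩ := M.exists_extension_of_fibrant hj hwj hY H
  have hwq : M.weq q := M.weq_of_comp_left j q hwj (hjq ▸ cyl.weq_p)
  exact ⟨⟨Z, cyl.ins ≫ j, q, M.cof_comp cyl.cof_ins hj, hwq, by simp [hjq, cyl.ins_p]⟩, H',
    hq, by simp [hH'], by simp [hH']⟩

lemma weq_coprod_map_id
    (hcoprod : ∀ ⦃X' X : C⦄ (w : X' ⟶ X), M.weq w → M.weq (coprod.map w w))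
    {X Z : C} {a : X ⟶ Z} {r : Z ⟶ X} (ha : M.weq a) (har : a ≫ r = 𝟙 X) :
    M.weq (coprod.map a (𝟙 X)) :=
  M.weq_retract _ (coprod.map a a) (𝟙 _) (𝟙 _) (coprod.map (𝟙 Z) a) (coprod.map (𝟙 Z) r)
    (by simp) (by ext <;> simp [reassoc_of% har]) (by ext <;> simp)
    (by ext <;> simp [reassoc_of% har]) (hcoprod a ha)

namespace CylinderHomotopic

variable {M}

variable (M) in
lemma refl {X Y : C} (f : X ⟶ Y) : M.CylinderHomotopic f f := by
  simpa using M.cylinderHomotopic_of_weq (coprod.desc (𝟙 X) (𝟙 X))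
    (M.weq_of_isIso (𝟙 X) inferInstance) (Category.comp_id _) f

lemma symm {X Y : C} {f g : X ⟶ Y} (h : M.CylinderHomotopic f g) : M.CylinderHomotopic g f := by
  obtain ⟨cyl, H, rfl, rfl⟩ := h
  simpa using M.cylinderHomotopic_of_weq (coprod.desc coprod.inr coprod.inl ≫ cyl.ins)
    cyl.weq_p (by ext <;> simp [cyl.ins_p]) H

lemma comp_right {X Y Z : C} {f g : X ⟶ Y} (h : M.CylinderHomotopic f g) (k : Y ⟶ Z) :
    M.CylinderHomotopic (f ≫ k) (g ≫ k) := by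
  obtain ⟨cyl, H, rfl, rfl⟩ := h
  exact ⟨cyl, H ≫ k, by simp, by simp⟩

lemma comp_left {W X Y : C} (hY : M.Fibrant Y) (w : W ⟶ X) {f g : X ⟶ Y}
    (h : M.CylinderHomotopic f g) : M.CylinderHomotopic (w ≫ f) (w ≫ g) := by
  obtain ⟨cyl, H, hp, rfl, rfl⟩ := M.exists_cylinder_fib_homotopy hY h
  obtain ⟨cylW⟩ := M.nonempty_cylinder W
  have := M.lift_of_weq_fib cylW.ins cyl.p cylW.cof_ins hp cyl.weq_p
  have sq : CommSq (coprod.map w w ≫ cyl.ins) cylW.ins cyl.p (cylW.p ≫ w) :=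
    ⟨by ext <;> simp [cyl.ins_p, reassoc_of% cylW.ins_p]⟩
  exact ⟨cylW, sq.lift ≫ H, by simp [sq.fac_left_assoc], by simp [sq.fac_left_assoc]⟩

lemma trans (hproper : M.LeftProper)
    (hcoprod : ∀ ⦃X' X : C⦄ (w : X' ⟶ X), M.weq w → M.weq (coprod.map w w))
    {X Y : C} {f g h : X ⟶ Y} (h₁ : M.CylinderHomotopic f g) (h₂ : M.CylinderHomotopic g h) :
    M.CylinderHomotopic f h := by
  obtain ⟨c₁, H₁, rfl, rfl⟩ := h₁
  obtain ⟨c₂, H₂, hglue, rfl⟩ := h₂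
  set a := coprod.inr ≫ c₁.ins
  have hap : a ≫ c₁.p = 𝟙 X := by simp [a, c₁.ins_p]
  have hu : M.weq (coprod.map a (𝟙 X)) :=
    M.weq_coprod_map_id hcoprod (M.weq_of_comp_eq_id c₁.weq_p hap) hap
  have hwinr : M.weq (pushout.inr (coprod.map a (𝟙 X)) c₂.ins) :=
    hproper _ _ _ _ (IsPushout.of_hasPushout _ _) c₂.cof_ins hu
  let q := pushout.desc (f := coprod.map a (𝟙 X)) (g := c₂.ins)
    (coprod.desc c₁.p (𝟙 X)) c₂.p (by ext <;> simp [hap, c₂.ins_p])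
  have hwq : M.weq q := M.weq_of_comp_left _ q hwinr (by simpa [q] using c₂.weq_p)
  let H := pushout.desc (f := coprod.map a (𝟙 X)) (g := c₂.ins)
    (coprod.desc H₁ (coprod.inr ≫ c₂.ins ≫ H₂)) H₂ (by ext <;> simp [a, hglue])
  simpa [H] using M.cylinderHomotopic_of_weq
    (coprod.map (coprod.inl ≫ c₁.ins) (𝟙 X) ≫ pushout.inl _ _) hwq
    (by ext <;> simp [q, c₁.ins_p]) H

lemma of_comp_left (hproper : M.LeftProper)
    (hcoprod : ∀ ⦃X' X : C⦄ (w : X' ⟶ X), M.weq w → M.weq (coprod.map w w))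
    {A X Y : C} {w : A ⟶ X} (hw : M.weq w) {f g : X ⟶ Y}
    (h : M.CylinderHomotopic (w ≫ f) (w ≫ g)) : M.CylinderHomotopic f g := by
  obtain ⟨cyl, K, hf, hg⟩ := h
  have hwinr : M.weq (pushout.inr (coprod.map w w) cyl.ins) :=
    hproper _ _ _ _ (IsPushout.of_hasPushout _ _) cyl.cof_ins (hcoprod w hw)
  let q := pushout.desc (f := coprod.map w w) (g := cyl.ins) (coprod.desc (𝟙 X) (𝟙 X))
    (cyl.p ≫ w) (by ext <;> simp [reassoc_of% cyl.ins_p])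
  have hwq : M.weq q :=
    M.weq_of_comp_left _ q hwinr (by simpa [q] using M.weq_comp _ _ cyl.weq_p hw)
  let H := pushout.desc (f := coprod.map w w) (g := cyl.ins) (coprod.desc f g) K
    (by ext <;> simp [hf, hg])
  simpa [H] using M.cylinderHomotopic_of_weq (pushout.inl _ _) hwq (by simp [q]) H

end CylinderHomotopic

lemma congruence_cylRel (hproper : M.LeftProper)
    (hcoprod : ∀ ⦃X' X : C⦄ (w : X' ⟶ X), M.weq w → M.weq (coprod.map w w)) :
    Congruence M.cylRel where
  equivalence := ⟨fun f => .refl M f.hom, .symm, CylinderHomotopic.trans hproper hcoprod⟩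
  comp_left {_ _ Z} f {_ _} h := CylinderHomotopic.comp_left Z.property f.hom h
  comp_right g h := CylinderHomotopic.comp_right h g.hom

lemma isIso_quotient_map_of_homotopyInverse {X Y : ObjectProperty.FullSubcategory M.Fibrant}
    (f : X ⟶ Y) (g : Y ⟶ X) (hfg : M.CylinderHomotopic (f.hom ≫ g.hom) (𝟙 X.obj))
    (hgf : M.CylinderHomotopic (g.hom ≫ f.hom) (𝟙 Y.obj)) :
    IsIso ((Quotient.functor M.cylRel).map f) :=
  ⟨(Quotient.functor M.cylRel).map g,
    by rw [← Functor.map_comp, ← (Quotient.functor M.cylRel).map_id]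
       exact CategoryTheory.Quotient.sound _ hfg,
    by rw [← Functor.map_comp, ← (Quotient.functor M.cylRel).map_id]
       exact CategoryTheory.Quotient.sound _ hgf⟩

/-- Factor `w` as a trivial cofibration `j`, which has a retraction since its source is
fibrant, followed by a trivial fibration `q`, which has a section since its target is
cofibrant. -/
lemma isIso_quotient_map_of_weq (hproper : M.LeftProper)
    (hcoprod : ∀ ⦃X' X : C⦄ (w : X' ⟶ X), M.weq w → M.weq (coprod.map w w))
    {A B : ObjectProperty.FullSubcategory M.Fibrant} (w : A ⟶ B) (hw : M.weq w.hom)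
    (hB : M.Cofibrant B.obj) : IsIso ((Quotient.functor M.cylRel).map w) := by
  obtain ⟨T, j, q, hj, hwj, hq, hjq⟩ := M.factor_triv_cof_fib w.hom
  have hwq : M.weq q := M.weq_of_comp_left j q hwj (hjq ▸ hw)
  let T' : ObjectProperty.FullSubcategory M.Fibrant := ⟨T, M.fibrant_of_fib hq B.property⟩
  obtain ⟨r, hjr⟩ := M.exists_extension_of_fibrant hj hwj A.property (𝟙 A.obj)
  obtain ⟨s, hsq⟩ := M.exists_lift_of_cofibrant hB hq hwq (𝟙 B.obj)
  have hisoj : IsIso ((Quotient.functor M.cylRel).map (ObjectProperty.homMk j : A ⟶ T')) :=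
    M.isIso_quotient_map_of_homotopyInverse _ (ObjectProperty.homMk r)
      (by simpa [hjr] using .refl M (𝟙 A.obj))
      (CylinderHomotopic.of_comp_left hproper hcoprod hwj
        (by simpa [reassoc_of% hjr] using .refl M j) : M.CylinderHomotopic (r ≫ j) (𝟙 T))
  have hisoq : IsIso ((Quotient.functor M.cylRel).map (ObjectProperty.homMk q : T' ⟶ B)) :=
    M.isIso_quotient_map_of_homotopyInverse _ (ObjectProperty.homMk s)
      (M.cylinderHomotopic_of_comp_eq hq hwq (by simp [hsq]))
      (by simpa [hsq] using .refl M (𝟙 B.obj))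
  rw [show w = (ObjectProperty.homMk j : A ⟶ T') ≫ ObjectProperty.homMk q by
    ext; exact hjq.symm, Functor.map_comp]
  infer_instance

structure CofibrantReplacement (X : C) where
  obj : C
  π : obj ⟶ X
  cofibrant_obj : M.Cofibrant obj
  fib_π : M.fib π
  weq_π : M.weq π

lemma nonempty_cofibrantReplacement (X : C) : Nonempty (M.CofibrantReplacement X) := by
  obtain ⟨X', i, π, hi, hπ, hwπ, hiπ⟩ := M.factor_cof_triv_fib (initial.to X)
  exact ⟨⟨X', π, by rwa [Cofibrant, initial.hom_ext (initial.to X') i], hπ, hwπ⟩⟩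

noncomputable def cofibrantReplacement (X : C) : M.CofibrantReplacement X :=
  (M.nonempty_cofibrantReplacement X).some

namespace CofibrantReplacement

variable {M} {X Y : C} (R : M.CofibrantReplacement X) (S : M.CofibrantReplacement Y)

lemma fibrant_obj (hX : M.Fibrant X) : M.Fibrant R.obj := M.fibrant_of_fib R.fib_π hX

noncomputable def map (f : X ⟶ Y) : R.obj ⟶ S.obj :=
  (M.exists_lift_of_cofibrant R.cofibrant_obj S.fib_π S.weq_π (R.π ≫ f)).choose

@[simp]
lemma map_π (f : X ⟶ Y) : R.map S f ≫ S.π = R.π ≫ f :=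
  (M.exists_lift_of_cofibrant R.cofibrant_obj S.fib_π S.weq_π (R.π ≫ f)).choose_spec

lemma weq_map {f : X ⟶ Y} (hf : M.weq f) : M.weq (R.map S f) :=
  M.weq_of_comp_right _ S.π S.weq_π (by rw [map_π]; exact M.weq_comp _ _ R.weq_π hf)

end CofibrantReplacement

noncomputable def cofibrantReplacementFunctor :
    ObjectProperty.FullSubcategory M.Fibrant ⥤ Quotient M.cylRel where
  obj X := (Quotient.functor M.cylRel).obj
    ⟨(M.cofibrantReplacement X.obj).obj, (M.cofibrantReplacement X.obj).fibrant_obj X.property⟩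
  map {X Y} f := (Quotient.functor M.cylRel).map <| ObjectProperty.homMk <|
    (M.cofibrantReplacement X.obj).map (M.cofibrantReplacement Y.obj) f.hom
  map_id X := by
    rw [← (Quotient.functor M.cylRel).map_id]
    exact CategoryTheory.Quotient.sound _ <| M.cylinderHomotopic_of_comp_eq
      (M.cofibrantReplacement X.obj).fib_π (M.cofibrantReplacement X.obj).weq_π (by simp)
  map_comp {X Y Z} f g := by
    rw [← Functor.map_comp]
    exact CategoryTheory.Quotient.sound _ <| M.cylinderHomotopic_of_comp_eq
      (M.cofibrantReplacement Z.obj).fib_π (M.cofibrantReplacement Z.obj).weq_π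
      (by simp [reassoc_of% CofibrantReplacement.map_π])

lemma isInvertedBy_cofibrantReplacementFunctor (hproper : M.LeftProper)
    (hcoprod : ∀ ⦃X' X : C⦄ (w : X' ⟶ X), M.weq w → M.weq (coprod.map w w)) :
    M.weqFib.IsInvertedBy M.cofibrantReplacementFunctor := fun X Y _ hw =>
  M.isIso_quotient_map_of_weq hproper hcoprod _
    ((M.cofibrantReplacement X.obj).weq_map _ hw) (M.cofibrantReplacement Y.obj).cofibrant_obj

lemma cylinderHomotopic_of_cofibrantReplacementFunctor_map_eq (hproper : M.LeftProper)
    (hcoprod : ∀ ⦃X' X : C⦄ (w : X' ⟶ X), M.weq w → M.weq (coprod.map w w))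
    {X Y : ObjectProperty.FullSubcategory M.Fibrant} {f g : X ⟶ Y}
    (h : M.cofibrantReplacementFunctor.map f = M.cofibrantReplacementFunctor.map g) :
    M.CylinderHomotopic f.hom g.hom := by
  have := M.congruence_cylRel hproper hcoprod
  set R := M.cofibrantReplacement X.obj
  set S := M.cofibrantReplacement Y.obj
  have hRS : M.CylinderHomotopic (R.map S f.hom) (R.map S g.hom) :=
    (Quotient.functor_map_eq_iff M.cylRel _ _).1 h
  refine .of_comp_left hproper hcoprod R.weq_π ?_
  simpa using hRS.comp_right S.π

lemma localization_map_eq_of_cylinderHomotopic {X Y : ObjectProperty.FullSubcategory M.Fibrant}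
    {f g : X ⟶ Y} (h : M.CylinderHomotopic f.hom g.hom) :
    M.weqFib.Q.map f = M.weqFib.Q.map g := by
  obtain ⟨cyl, H, hp, hf, hg⟩ := M.exists_cylinder_fib_homotopy Y.property h
  let Z : ObjectProperty.FullSubcategory M.Fibrant := ⟨cyl.Z, M.fibrant_of_fib hp X.property⟩
  let i₀ : X ⟶ Z := ObjectProperty.homMk (coprod.inl ≫ cyl.ins)
  let i₁ : X ⟶ Z := ObjectProperty.homMk (coprod.inr ≫ cyl.ins)
  let p : Z ⟶ X := ObjectProperty.homMk cyl.p
  have : IsIso (M.weqFib.Q.map p) := M.weqFib.Q_inverts p cyl.weq_p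
  have hi : M.weqFib.Q.map i₀ = M.weqFib.Q.map i₁ := by
    rw [← cancel_mono (M.weqFib.Q.map p), ← Functor.map_comp, ← Functor.map_comp]
    congr 1
    ext
    simp [i₀, i₁, p, cyl.ins_p]
  rw [show f = i₀ ≫ ObjectProperty.homMk H by ext; simp [i₀, hf],
    show g = i₁ ≫ ObjectProperty.homMk H by ext; simp [i₁, hg], Functor.map_comp,
    Functor.map_comp, hi]

end ModelStructure

open ModelStructure in
/-- If `M` is left proper and `w ⊔ w` is a weak equivalence for every weak equivalence `w`,
then two parallel morphisms between fibrant objects become equal in the homotopy category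
(the localization of the fibrant objects at the weak equivalences) if and only if they are
cylinder homotopic. In particular, cylinder homotopy is transitive on morphisms between
fibrant objects. -/
theorem localization_map_eq_iff_cylinderHomotopic_of_fibrant
    {C : Type u} [Category.{v} C] [HasFiniteLimits C] [HasFiniteColimits C]
    (M : ModelStructure C) (hproper : M.LeftProper)
    (hcoprod : ∀ ⦃X' X : C⦄ (w : X' ⟶ X), M.weq w → M.weq (coprod.map w w)) :
    (∀ (X Y : ObjectProperty.FullSubcategory M.Fibrant) (f g : X ⟶ Y),
      M.weqFib.Q.map f = M.weqFib.Q.map g ↔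
        M.CylinderHomotopic (X := X.obj) (Y := Y.obj) f.hom g.hom) ∧
    (∀ (X Y : C), M.Fibrant X → M.Fibrant Y → ∀ f g h : X ⟶ Y,
      M.CylinderHomotopic f g → M.CylinderHomotopic g h → M.CylinderHomotopic f h) := by
  refine ⟨fun X Y f g => ⟨fun h => ?_, M.localization_map_eq_of_cylinderHomotopic⟩,
    fun _ _ _ _ _ _ _ => CylinderHomotopic.trans hproper hcoprod⟩
  exact M.cylinderHomotopic_of_cofibrantReplacementFunctor_map_eq hproper hcoprod <|
    AreEqualizedByLocalization.map_eq_of_isInvertedBy h _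
      (M.isInvertedBy_cofibrantReplacementFunctor hproper hcoprod)
end

section
/- Let M be a left proper model category in which w ⊔ w is a weak equivalence for every weak equivalence w. Let w : X' → X be a weak equivalence, let (Z', ins', p') be a cylinder for X', and let the square with top edge w ⊔ w : X' ⊔ X' → X ⊔ X, left edge ins' : X' ⊔ X' → Z', right edge i : X ⊔ X → Z and bottom edge w' : Z' → Z be a pushout. Then w' is a weak equivalence, and there is a unique morphism s : Z → X with i ≫ s equal to the fold map (1,1) : X ⊔ X → X and w' ≫ s = p' ≫ w; moreover s is a weak equivalence, so that (Z, i, s) is a cylinder for X. -/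
open CategoryTheory CategoryTheory.Limits

universe v u

/-!
The comparison map `w'` is a pushout of `w ⊔ w` along the cofibration `ins'`, hence a weak
equivalence by left properness, and `i` is a pushout of `ins'`, hence a cofibration. The
fold map and `p' ≫ w` agree on `X' ⊔ X'`, so they glue to a unique `s : Z ⟶ X`; since
`w' ≫ s = p' ≫ w` is a weak equivalence, so is `s` by two-out-of-three.
-/

namespace CategoryTheory.IsPushout

variable {C : Type*} [Category* C] {P X Y Z : C} {f : Z ⟶ X} {g : Z ⟶ Y} {inl : X ⟶ P}
  {inr : Y ⟶ P}

theorem existsUnique_desc (hP : IsPushout f g inl inr) {W : C} (h : X ⟶ W) (k : Y ⟶ W)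
    (w : f ≫ h = g ≫ k) : ∃! d : P ⟶ W, inl ≫ d = h ∧ inr ≫ d = k :=
  ⟨hP.desc h k w, ⟨hP.inl_desc h k w, hP.inr_desc h k w⟩,
    fun _ ⟨hl, hr⟩ => hP.hom_ext (by rw [hl, hP.inl_desc]) (by rw [hr, hP.inr_desc])⟩

end CategoryTheory.IsPushout

namespace ModelStructure

variable {C : Type u} [Category.{v} C] [HasFiniteLimits C] [HasFiniteColimits C]
  (M : ModelStructure C)

/-- The retract argument: factor `f = j ≫ q` with `q` a trivial fibration; a lift in the
square `(j, f, q, 𝟙)` exhibits `f` as a retract of the cofibration `j`. -/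
theorem cof_of_hasLiftingProperty {A B : C} (f : A ⟶ B)
    (hf : ∀ ⦃X Y : C⦄ (q : X ⟶ Y), M.fib q → M.weq q → HasLiftingProperty f q) : M.cof f := by
  obtain ⟨W, j, q, hj, hq, hqw, hjq⟩ := M.factor_cof_triv_fib f
  have := hf q hq hqw
  have sq : CommSq j f q (𝟙 B) := ⟨by rw [hjq, Category.comp_id]⟩
  exact M.cof_retract f j (𝟙 A) (𝟙 A) sq.lift q (Category.comp_id _) sq.fac_right
    (by rw [Category.id_comp, sq.fac_left]) (by rw [hjq, Category.id_comp]) hj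

theorem cof_of_isPushout {A B X P : C} {f : A ⟶ X} {g : A ⟶ B} {h : X ⟶ P} {k : B ⟶ P}
    (hpo : IsPushout f g h k) (hg : M.cof g) : M.cof h :=
  M.cof_of_hasLiftingProperty h fun _ _ q hq hqw =>
    have := M.lift_of_weq_fib g q hg hq hqw
    hpo.hasLiftingProperty q

end ModelStructure

open ModelStructure in
/-- Pushing out a cylinder for `X'` along a weak equivalence `w : X' ⟶ X` (more precisely,
pushing out `w ⊔ w` along the cofibration `ins'`) yields a cylinder for `X`: the comparison
morphism `w'` is a weak equivalence, `i` is a cofibration, there is a unique morphism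
`s : Z ⟶ X` with `i ≫ s` the fold map and `w' ≫ s = p' ≫ w`, and this `s` is a weak
equivalence. -/
theorem pushout_cylinder_along_weq
    {C : Type u} [Category.{v} C] [HasFiniteLimits C] [HasFiniteColimits C]
    (M : ModelStructure C) (hproper : M.LeftProper)
    (hcoprod : ∀ ⦃A B : C⦄ (w : A ⟶ B), M.weq w → M.weq (coprod.map w w))
    {X' X : C} (w : X' ⟶ X) (hw : M.weq w) (cyl : M.Cylinder X')
    {Z : C} (i : (X ⨿ X) ⟶ Z) (w' : cyl.Z ⟶ Z)
    (hpo : IsPushout (coprod.map w w) cyl.ins i w') :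
    M.weq w' ∧ M.cof i ∧
    (∃! s : Z ⟶ X, i ≫ s = coprod.desc (𝟙 X) (𝟙 X) ∧ w' ≫ s = cyl.p ≫ w) ∧
    (∀ s : Z ⟶ X, i ≫ s = coprod.desc (𝟙 X) (𝟙 X) → w' ≫ s = cyl.p ≫ w → M.weq s) := by
  have hw' : M.weq w' := hproper _ _ _ _ hpo cyl.cof_ins (hcoprod w hw)
  refine ⟨hw', M.cof_of_isPushout hpo cyl.cof_ins, hpo.existsUnique_desc _ _ ?_, ?_⟩
  · rw [← Category.assoc, cyl.ins_p]
    exact coprod.map_codiag w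
  · intro s _ hs
    exact M.weq_of_comp_left w' s hw' (hs ▸ M.weq_comp cyl.p w cyl.weq_p hw)
end

section
/- Let M be a left proper model category in which w ⊔ w is a weak equivalence for every weak equivalence w. Let X, Y be objects of M, let f, g : X → Y be parallel morphisms, and let w : X' → X be a weak equivalence such that w ≫ f and w ≫ g are cylinder homotopic. Then f and g are cylinder homotopic. -/
open CategoryTheory CategoryTheory.Limits

universe v u

/-!
Push the given cylinder `X' ⊔ X' ⟶ Z` forward along `w ⊔ w`. The new map `X ⊔ X ⟶ Q` is a
cofibration as a pushout of one, and `Z ⟶ Q` is a weak equivalence by left properness, so the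
induced `Q ⟶ X` is a weak equivalence by two-out-of-three; the homotopy `Z ⟶ Y` and `(f, g)`
glue to a homotopy `Q ⟶ Y`.
-/

namespace ModelStructure

variable {C : Type u} [Category.{v} C] [HasFiniteLimits C] [HasFiniteColimits C]
  (M : ModelStructure C)

lemma cof_of_hasLiftingProperty_s3 {A B : C} (i : A ⟶ B)
    (hi : ∀ ⦃Z W : C⦄ (p : Z ⟶ W), M.fib p → M.weq p → HasLiftingProperty i p) : M.cof i := by
  obtain ⟨Z, c, q, hc, hq_fib, hq_weq, hcq⟩ := M.factor_cof_triv_fib i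
  have := hi q hq_fib hq_weq
  have sq : CommSq c i q (𝟙 B) := ⟨by rw [hcq, Category.comp_id]⟩
  exact M.cof_retract i c (𝟙 A) (𝟙 A) sq.lift q (Category.id_comp _) sq.fac_right
    (by rw [Category.id_comp, sq.fac_left]) (by rw [Category.id_comp, hcq]) hc

lemma cof_of_isPushout_s3 {A B X P : C} {s : A ⟶ X} {i : A ⟶ B} {i' : X ⟶ P} {t : B ⟶ P}
    (hpo : IsPushout s i i' t) (hi : M.cof i) : M.cof i' :=
  M.cof_of_hasLiftingProperty_s3 i' fun _ _ p hp_fib hp_weq =>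
    have := M.lift_of_weq_fib i p hi hp_fib hp_weq
    hpo.hasLiftingProperty p

variable {M}

lemma Cylinder.ins_comp_eq_desc {X Y : C} (cyl : M.Cylinder X) {H : cyl.Z ⟶ Y} {f g : X ⟶ Y}
    (hf : coprod.inl ≫ cyl.ins ≫ H = f) (hg : coprod.inr ≫ cyl.ins ≫ H = g) :
    cyl.ins ≫ H = coprod.desc f g := by
  ext
  · rw [hf, coprod.inl_desc]
  · rw [hg, coprod.inr_desc]

noncomputable def Cylinder.pushforward (hproper : M.LeftProper) {X' X : C} (cyl : M.Cylinder X')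
    (w : X' ⟶ X) (hw : M.weq w) (hww : M.weq (coprod.map w w)) : M.Cylinder X where
  Z := pushout (coprod.map w w) cyl.ins
  ins := pushout.inl _ _
  p := pushout.desc (coprod.desc (𝟙 X) (𝟙 X)) (cyl.p ≫ w) (by
    rw [← Category.assoc, cyl.ins_p]
    simp)
  cof_ins := M.cof_of_isPushout_s3 (IsPushout.of_hasPushout _ _) cyl.cof_ins
  weq_p := by
    have hinr : M.weq (pushout.inr (coprod.map w w) cyl.ins) :=
      hproper _ _ _ _ (IsPushout.of_hasPushout _ _) cyl.cof_ins hww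
    refine M.weq_of_comp_left _ _ hinr ?_
    rw [pushout.inr_desc]
    exact M.weq_comp _ _ cyl.weq_p hw
  ins_p := pushout.inl_desc _ _ _

end ModelStructure

open ModelStructure in
/-- In a left proper model category in which `w ⊔ w` is a weak equivalence for every weak
equivalence `w`: if `w : X' ⟶ X` is a weak equivalence and `w ≫ f` is cylinder homotopic to
`w ≫ g`, then `f` is cylinder homotopic to `g`. -/
theorem cylinderHomotopic_of_precomp_weq
    {C : Type u} [Category.{v} C] [HasFiniteLimits C] [HasFiniteColimits C]
    (M : ModelStructure C) (hproper : M.LeftProper)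
    (hcoprod : ∀ ⦃A B : C⦄ (v : A ⟶ B), M.weq v → M.weq (coprod.map v v))
    {X' X Y : C} (f g : X ⟶ Y) (w : X' ⟶ X) (hw : M.weq w)
    (h : M.CylinderHomotopic (w ≫ f) (w ≫ g)) :
    M.CylinderHomotopic f g := by
  obtain ⟨cyl, H, hH₁, hH₂⟩ := h
  have hHw : coprod.map w w ≫ coprod.desc f g = cyl.ins ≫ H := by
    rw [coprod.map_desc, cyl.ins_comp_eq_desc hH₁ hH₂]
  refine ⟨cyl.pushforward hproper w hw (hcoprod w hw), pushout.desc _ H hHw, ?_, ?_⟩ <;>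
    simp only [Cylinder.pushforward, pushout.inl_desc, coprod.inl_desc, coprod.inr_desc]
end

section
/- There do not exist a natural number k, ℤ/4ℤ-linear maps ins₀, ins₁ : ℤ/4ℤ → (ℤ/4ℤ)^k with 2 • ins₀ = 2 • ins₁, and a ℤ/4ℤ-linear map H : (ℤ/4ℤ)^k → ℤ/4ℤ × ℤ/2ℤ such that H ∘ ins₀ = f and H ∘ ins₁ = g, where f, g : ℤ/4ℤ → ℤ/4ℤ × ℤ/2ℤ are the linear maps f(x) = (x, 0) and g(x) = (x, x mod 2). (That is, the two morphisms (1 0) and (1 1) from (ℤ/4ℤ, 2) to (ℤ/4ℤ ⊕ ℤ/2ℤ, (2 0)) in the category of ℤ/4ℤ-modules under ℤ/4ℤ are not cylinder homotopic.) -/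
/-- `ℤ/2ℤ` as a `ℤ/4ℤ`-algebra (hence a `ℤ/4ℤ`-module) via the canonical surjection
`ℤ/4ℤ → ℤ/2ℤ`. -/
noncomputable instance : Algebra (ZMod 4) (ZMod 2) :=
  (ZMod.castHom (show 2 ∣ 4 by norm_num) (ZMod 2)).toAlgebra

/-!
With `a = ins₀ 1` and `b = ins₁ 1`, the homotopy condition says that `a - b` is `2`-torsion in
`(ℤ/4ℤ)^k`, hence `a - b = 2 • c`. But `H (a - b) = (1, 0) - (1, 1)` has second coordinate `1`,
whereas the second coordinate of `H (2 • c) = 2 • H c` vanishes because `2` acts as `0` on `ℤ/2ℤ`.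
-/

theorem ZMod.exists_eq_two_mul_of_two_mul_eq_zero (x : ZMod 4) (hx : 2 * x = 0) :
    ∃ y : ZMod 4, x = 2 * y := by
  revert x; decide

theorem exists_eq_two_smul_of_two_smul_eq_zero {ι : Type*} {x : ι → ZMod 4}
    (hx : (2 : ZMod 4) • x = 0) : ∃ c : ι → ZMod 4, x = (2 : ZMod 4) • c := by
  choose c hc using fun i ↦ ZMod.exists_eq_two_mul_of_two_mul_eq_zero (x i) (congrFun hx i)
  exact ⟨c, funext hc⟩

theorem ZMod.two_smul_zmod_two (y : ZMod 2) : (2 : ZMod 4) • y = 0 := by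
  revert y; decide

theorem LinearMap.map_eq_zero_of_two_smul_eq_zero {ι : Type*}
    (f : (ι → ZMod 4) →ₗ[ZMod 4] ZMod 2) {x : ι → ZMod 4} (hx : (2 : ZMod 4) • x = 0) :
    f x = 0 := by
  obtain ⟨c, rfl⟩ := exists_eq_two_smul_of_two_smul_eq_zero hx
  rw [map_smul, ZMod.two_smul_zmod_two]

/-- The two morphisms `(1 0), (1 1) : ℤ/4ℤ → ℤ/4ℤ ⊕ ℤ/2ℤ` (namely `x ↦ (x, 0)` and
`x ↦ (x, x mod 2)`) are not cylinder homotopic: there is no `k`, no linear maps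
`ins₀, ins₁ : ℤ/4ℤ → (ℤ/4ℤ)^k` with `2 • ins₀ = 2 • ins₁` and no linear map
`H : (ℤ/4ℤ)^k → ℤ/4ℤ × ℤ/2ℤ` with `H ∘ ins₀ = (1 0)` and `H ∘ ins₁ = (1 1)`. -/
theorem zmod4_not_cylinder_homotopic :
    ¬ ∃ (k : ℕ) (ins₀ ins₁ : ZMod 4 →ₗ[ZMod 4] (Fin k → ZMod 4))
        (H : (Fin k → ZMod 4) →ₗ[ZMod 4] (ZMod 4 × ZMod 2)),
      (2 : ZMod 4) • ins₀ = (2 : ZMod 4) • ins₁ ∧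
      H ∘ₗ ins₀ = LinearMap.prod LinearMap.id 0 ∧
      H ∘ₗ ins₁ = LinearMap.prod LinearMap.id (Algebra.linearMap (ZMod 4) (ZMod 2)) := by
  rintro ⟨k, ins₀, ins₁, H, h_two, h_f, h_g⟩
  set d := ins₀ 1 - ins₁ 1
  have hd : (2 : ZMod 4) • d = 0 := by
    simpa [d, smul_sub, sub_eq_zero] using LinearMap.congr_fun h_two 1
  have hHd : H d = (0, 1) := by
    have h₀ := LinearMap.congr_fun h_f 1
    have h₁ := LinearMap.congr_fun h_g 1
    simp only [LinearMap.comp_apply] at h₀ h₁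
    rw [map_sub, h₀, h₁]
    decide
  have h_snd := (LinearMap.snd (ZMod 4) (ZMod 4) (ZMod 2) ∘ₗ H).map_eq_zero_of_two_smul_eq_zero hd
  simp [hHd] at h_snd
end
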